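/- Fix p ≥ 2 and let D be a distribution on ℝᵈ such that for some ε > 0 and δ ∈ (0,1], every v with ‖v‖_p ≤ ε satisfies tv(D, D+v) ≤ δ. Then E_{η~D}[‖η‖₂] ≥ (ε d^{1−1/p}/24)·(1−δ)/δ. -/

import Mathlib

open MeasureTheory

/-- Total variation distance between two measures. -/
noncomputable def tv {α : Type*} [MeasurableSpace α] (P Q : Measure α) : ℝ :=
  ⨆ A : {s : Set α // MeasurableSet s}, |(P A.1).toReal - (Q A.1).toReal|

/-- The ℓ_p norm of a vector in ℝᵈ, for `p : ℝ≥0∞` (with `p = ∞` giving the sup norm). -/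
noncomputable def lpNorm {d : ℕ} (p : ENNReal) (v : EuclideanSpace ℝ (Fin d)) : ℝ :=
  if p = ⊤ then ⨆ i, |v i| else (∑ i, |v i| ^ p.toReal) ^ (1 / p.toReal)

/-!
For a sign vector `s ∈ {±1}ᵈ`, shift by `v = a • s` with `a = ε d^(-1/p)`, so that `‖v‖_p = ε`.
The linear form `Z = ⟪·, s⟫` increases by `t = a d = ε d^(1-1/p)` under this shift, so the tail
probability `P(Z ≥ c)` drops by at most `δ` when `c` increases by `t`. Iterating `K ≈ 1/(2δ)` times
from `c = -Kt/2` shows `|Z| ≥ Kt/2` with probability at least `1 - Kδ`, whence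
`E|Z| ≥ t(1-δ)/(8δ)`. Averaging over the `2ᵈ` sign vectors and using
`(∑ₛ |⟪x, s⟫|)² ≤ 2ᵈ ∑ₛ ⟪x, s⟫² = 4ᵈ ‖x‖₂²` turns this into the bound on `E‖η‖₂`.
-/

open scoped InnerProductSpace

lemma abs_measureReal_sub_le_tv {α : Type*} [MeasurableSpace α] (P Q : Measure α)
    [IsFiniteMeasure P] [IsFiniteMeasure Q] {A : Set α} (hA : MeasurableSet A) :
    |P.real A - Q.real A| ≤ tv P Q := by
  refine le_ciSup
    (f := fun B : {s : Set α // MeasurableSet s} => |(P B.1).toReal - (Q B.1).toReal|)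
    ⟨P.real Set.univ + Q.real Set.univ, ?_⟩ ⟨A, hA⟩
  rintro _ ⟨B, rfl⟩
  change |P.real B.1 - Q.real B.1| ≤ _
  have hP := measureReal_mono (μ := P) (Set.subset_univ B.1)
  have hQ := measureReal_mono (μ := Q) (Set.subset_univ B.1)
  rw [abs_sub_le_iff]
  constructor <;> linarith [measureReal_nonneg (μ := P) (s := B.1),
    measureReal_nonneg (μ := Q) (s := B.1)]

lemma measureReal_le_add_of_tv_map_add_le {E : Type*} [MeasurableSpace E] [Add E]
    [MeasurableAdd E] {D : Measure E} [IsProbabilityMeasure D] {v : E} {δ : ℝ}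
    (hTV : tv D (D.map (· + v)) ≤ δ)
    {Z : E → ℝ} (hZ : Measurable Z) {t : ℝ} (hZv : ∀ x, Z (x + v) = Z x + t) (c : ℝ) :
    D.real {x | c ≤ Z x} ≤ D.real {x | c + t ≤ Z x} + δ := by
  have hA : MeasurableSet {x | c + t ≤ Z x} := measurableSet_le measurable_const hZ
  have hmap : (D.map (· + v)).real {x | c + t ≤ Z x} = D.real {x | c ≤ Z x} := by
    rw [measureReal_def, Measure.map_apply (measurable_add_const v) hA, ← measureReal_def]
    congr 1
    ext x
    simp [hZv]
  have : IsProbabilityMeasure (D.map (· + v)) :=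
    Measure.isProbabilityMeasure_map (measurable_add_const v).aemeasurable
  have hdiff := abs_measureReal_sub_le_tv D (D.map (· + v)) hA
  rw [hmap] at hdiff
  linarith [(abs_sub_le_iff.mp hdiff).2]

section ShiftedTails

variable {α : Type*} [MeasurableSpace α] {μ : Measure α} {f : α → ℝ} {t δ : ℝ}

lemma measureReal_le_add_nat_mul_of_shift
    (hshift : ∀ c, μ.real {x | c ≤ f x} ≤ μ.real {x | c + t ≤ f x} + δ) (n : ℕ) (c : ℝ) :
    μ.real {x | c ≤ f x} ≤ μ.real {x | c + n * t ≤ f x} + n * δ := by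
  induction n generalizing c with
  | zero => simp
  | succ n ih =>
    have := ih (c + t)
    have := hshift c
    rw [show c + ((n + 1 : ℕ) : ℝ) * t = c + t + n * t by push_cast; ring]
    push_cast
    linarith

lemma ofReal_le_lintegral_abs_of_shift_nat [IsProbabilityMeasure μ] (hf : Measurable f)
    (ht : 0 ≤ t) (hshift : ∀ c, μ.real {x | c ≤ f x} ≤ μ.real {x | c + t ≤ f x} + δ) (K : ℕ) :
    ENNReal.ofReal (K * t / 2 * (1 - K * δ)) ≤ ∫⁻ x, ENNReal.ofReal |f x| ∂μ := by
  set h : ℝ := K * t / 2 with h_def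
  have hh : 0 ≤ h := by positivity
  have htail : 1 - K * δ ≤ μ.real {x | h ≤ |f x|} := by
    have hiter := measureReal_le_add_nat_mul_of_shift hshift K (-h)
    rw [show -h + K * t = h by rw [h_def]; ring] at hiter
    have hlow : μ.real {x | f x < -h} = 1 - μ.real {x | -h ≤ f x} := by
      rw [← probReal_compl_eq_one_sub (measurableSet_le measurable_const hf)]
      congr 1
      ext x
      simp
    have hsplit : μ.real {x | f x < -h} + μ.real {x | h ≤ f x} ≤ μ.real {x | h ≤ |f x|} := by
      rw [← measureReal_union _ (measurableSet_le measurable_const hf)]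
      · refine measureReal_mono fun x hx => ?_
        rcases hx with (hx : f x < -h) | (hx : h ≤ f x)
        · exact (le_neg_of_le_neg hx.le).trans (neg_le_abs _)
        · exact hx.trans (le_abs_self _)
      · exact Set.disjoint_left.mpr fun x (h1 : f x < -h) (h2 : h ≤ f x) => by linarith
    linarith
  calc ENNReal.ofReal (h * (1 - K * δ))
      ≤ ENNReal.ofReal h * μ {x | ENNReal.ofReal h ≤ ENNReal.ofReal |f x|} := by
        rw [ENNReal.ofReal_mul hh, ← ofReal_measureReal]
        gcongr
        exact htail.trans (measureReal_mono fun x hx => ENNReal.ofReal_le_ofReal hx)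
    _ ≤ ∫⁻ x, ENNReal.ofReal |f x| ∂μ :=
        mul_meas_ge_le_lintegral₀ hf.abs.ennreal_ofReal.aemeasurable _

lemma exists_nat_div_four_le_mul_one_sub (hδ0 : 0 < δ) (hδ1 : δ ≤ 1) :
    ∃ K : ℕ, (1 - δ) / (4 * δ) ≤ K * (1 - K * δ) := by
  have hnonneg : 0 ≤ (1 - δ) / (2 * δ) := div_nonneg (by linarith) (by linarith)
  refine ⟨⌈(1 - δ) / (2 * δ)⌉₊, ?_⟩
  set K : ℝ := ((⌈(1 - δ) / (2 * δ)⌉₊ : ℕ) : ℝ)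
  have hlo : (1 - δ) / 2 ≤ K * δ := by
    have := mul_le_mul_of_nonneg_right (Nat.le_ceil ((1 - δ) / (2 * δ))) hδ0.le
    rwa [div_mul_eq_mul_div, mul_div_mul_right _ _ hδ0.ne'] at this
  have hhi : K * δ ≤ (1 + δ) / 2 := by
    have := mul_le_mul_of_nonneg_right (Nat.ceil_lt_add_one hnonneg).le hδ0.le
    rw [add_mul, div_mul_eq_mul_div, mul_div_mul_right _ _ hδ0.ne'] at this
    linarith
  -- `y (1 - y) ≥ (1 - δ²) / 4` for `y = K δ` between the roots `(1 ± δ) / 2`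
  rw [div_le_iff₀ (by positivity)]
  nlinarith [mul_nonneg (sub_nonneg.mpr hlo) (sub_nonneg.mpr hhi)]

lemma ofReal_le_lintegral_abs_of_shift [IsProbabilityMeasure μ] (hf : Measurable f) (ht : 0 ≤ t)
    (hδ0 : 0 < δ) (hδ1 : δ ≤ 1)
    (hshift : ∀ c, μ.real {x | c ≤ f x} ≤ μ.real {x | c + t ≤ f x} + δ) :
    ENNReal.ofReal (t / 8 * ((1 - δ) / δ)) ≤ ∫⁻ x, ENNReal.ofReal |f x| ∂μ := by
  obtain ⟨K, hK⟩ := exists_nat_div_four_le_mul_one_sub hδ0 hδ1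
  refine (ENNReal.ofReal_le_ofReal ?_).trans (ofReal_le_lintegral_abs_of_shift_nat hf ht hshift K)
  calc t / 8 * ((1 - δ) / δ) = t / 2 * ((1 - δ) / (4 * δ)) := by field_simp; ring
    _ ≤ t / 2 * (K * (1 - K * δ)) := by gcongr
    _ = K * t / 2 * (1 - K * δ) := by ring

end ShiftedTails

lemma lpNorm_eq_of_forall_abs_eq {d : ℕ} {p : ENNReal} (hp : p ≠ 0) (hd : 0 < d)
    {v : EuclideanSpace ℝ (Fin d)} {a : ℝ} (ha : 0 ≤ a) (hv : ∀ i, |v i| = a) :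
    _root_.lpNorm p v = (d : ℝ) ^ (1 / p.toReal) * a := by
  unfold _root_.lpNorm
  simp only [hv]
  split_ifs with htop
  · have : Nonempty (Fin d) := ⟨⟨0, hd⟩⟩
    simp [htop]
  · have hr : p.toReal ≠ 0 := ENNReal.toReal_ne_zero.mpr ⟨hp, htop⟩
    rw [Finset.sum_const, Finset.card_univ, Fintype.card_fin, nsmul_eq_mul,
      Real.mul_rpow (by positivity) (by positivity), ← Real.rpow_mul ha, mul_one_div_cancel hr,
      Real.rpow_one]

lemma one_sub_one_div_toReal_ne_zero {p : ENNReal} (hp : p ≠ 1) : 1 - 1 / p.toReal ≠ 0 := by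
  rw [sub_ne_zero, ne_comm, one_div, inv_ne_one]
  contrapose! hp
  exact (ENNReal.toReal_eq_one_iff p).mp hp

section SignVectors

variable {d : ℕ}

noncomputable def signVec (s : Fin d → ℤˣ) : EuclideanSpace ℝ (Fin d) :=
  WithLp.toLp 2 fun i => ((s i : ℤ) : ℝ)

lemma signVec_apply_mul_self (s : Fin d → ℤˣ) (i : Fin d) : signVec s i * signVec s i = 1 := by
  rcases Int.units_eq_one_or (s i) with h | h <;> simp [signVec, h]

lemma abs_signVec_apply (s : Fin d → ℤˣ) (i : Fin d) : |signVec s i| = 1 := by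
  rcases Int.units_eq_one_or (s i) with h | h <;> simp [signVec, h]

lemma real_inner_signVec_self (s : Fin d → ℤˣ) : ⟪signVec s, signVec s⟫_ℝ = d := by
  rw [real_inner_self_eq_norm_sq, EuclideanSpace.norm_sq_eq]
  simp [abs_signVec_apply]

lemma real_inner_signVec (x : EuclideanSpace ℝ (Fin d)) (s : Fin d → ℤˣ) :
    ⟪x, signVec s⟫_ℝ = ∑ i, x i * signVec s i := by
  simp [PiLp.inner_apply, mul_comm]

-- Flipping the `j`-th sign is a bijection of sign vectors that negates `s i * s j` when `i ≠ j`.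
lemma sum_signVec_apply_mul_signVec_apply (i j : Fin d) :
    ∑ s : Fin d → ℤˣ, signVec s i * signVec s j = if i = j then 2 ^ d else 0 := by
  split_ifs with hij
  · subst hij
    simp [signVec_apply_mul_self, Fintype.card_units_int]
  · have hflip := Fintype.sum_equiv (Equiv.mulLeft (Pi.mulSingle j (-1)))
      (fun s : Fin d → ℤˣ => signVec s i * signVec s j)
      (fun s => -(signVec s i * signVec s j)) fun s => by
        simp [signVec, Pi.mulSingle_apply, hij]
    rw [Finset.sum_neg_distrib] at hflip
    linarith

lemma sum_real_inner_signVec_sq (x : EuclideanSpace ℝ (Fin d)) :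
    ∑ s : Fin d → ℤˣ, ⟪x, signVec s⟫_ℝ ^ 2 = 2 ^ d * ‖x‖ ^ 2 := by
  have hexpand : ∀ s : Fin d → ℤˣ, ⟪x, signVec s⟫_ℝ ^ 2
      = ∑ i, ∑ j, x i * x j * (signVec s i * signVec s j) := fun s => by
    rw [real_inner_signVec, sq, Finset.sum_mul_sum]
    exact Finset.sum_congr rfl fun i _ => Finset.sum_congr rfl fun j _ => by ring
  rw [Finset.sum_congr rfl fun s _ => hexpand s, Finset.sum_comm]
  simp_rw [Finset.sum_comm (γ := Fin d → ℤˣ), ← Finset.mul_sum,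
    sum_signVec_apply_mul_signVec_apply, EuclideanSpace.norm_sq_eq, Finset.mul_sum]
  simp [mul_comm, sq]

lemma sum_abs_real_inner_signVec_le (x : EuclideanSpace ℝ (Fin d)) :
    ∑ s : Fin d → ℤˣ, |⟪x, signVec s⟫_ℝ| ≤ 2 ^ d * ‖x‖ := by
  have hcs := sq_sum_le_card_mul_sum_sq (s := Finset.univ)
    (f := fun s : Fin d → ℤˣ => |⟪x, signVec s⟫_ℝ|)
  simp only [sq_abs, sum_real_inner_signVec_sq, Finset.card_univ, Fintype.card_fun,
    Fintype.card_units_int, Fintype.card_fin] at hcs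
  refine (pow_le_pow_iff_left₀ (by positivity) (by positivity) two_ne_zero).mp ?_
  calc _ ≤ _ := hcs
    _ = (2 ^ d * ‖x‖) ^ 2 := by push_cast; ring

lemma le_lintegral_norm_of_forall_le_lintegral_abs_inner_signVec
    (D : Measure (EuclideanSpace ℝ (Fin d))) {c : ENNReal}
    (h : ∀ s : Fin d → ℤˣ, c ≤ ∫⁻ η, ENNReal.ofReal |⟪η, signVec s⟫_ℝ| ∂D) :
    c ≤ ∫⁻ η, ENNReal.ofReal ‖η‖ ∂D := by
  have hpointwise : ∀ η : EuclideanSpace ℝ (Fin d),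
      ∑ s : Fin d → ℤˣ, ENNReal.ofReal |⟪η, signVec s⟫_ℝ| ≤ 2 ^ d * ENNReal.ofReal ‖η‖ := by
    intro η
    rw [← ENNReal.ofReal_sum_of_nonneg fun _ _ => abs_nonneg _]
    calc _ ≤ ENNReal.ofReal (2 ^ d * ‖η‖) :=
          ENNReal.ofReal_le_ofReal (sum_abs_real_inner_signVec_le η)
      _ = 2 ^ d * ENNReal.ofReal ‖η‖ := by
        rw [ENNReal.ofReal_mul (by positivity), ENNReal.ofReal_pow zero_le_two,
          ENNReal.ofReal_ofNat]
  refine (ENNReal.mul_le_mul_iff_right (pow_ne_zero d two_ne_zero)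
    (ENNReal.pow_ne_top (n := d) ENNReal.ofNat_ne_top)).mp ?_
  calc 2 ^ d * c = ∑ _s : Fin d → ℤˣ, c := by simp [Fintype.card_units_int]
    _ ≤ ∑ s : Fin d → ℤˣ, ∫⁻ η, ENNReal.ofReal |⟪η, signVec s⟫_ℝ| ∂D :=
      Finset.sum_le_sum fun s _ => h s
    _ = ∫⁻ η, ∑ s : Fin d → ℤˣ, ENNReal.ofReal |⟪η, signVec s⟫_ℝ| ∂D :=
      (lintegral_finsetSum _ fun s _ => by fun_prop).symm
    _ ≤ ∫⁻ η, 2 ^ d * ENNReal.ofReal ‖η‖ ∂D := lintegral_mono hpointwise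
    _ = 2 ^ d * ∫⁻ η, ENNReal.ofReal ‖η‖ ∂D := lintegral_const_mul _ (by fun_prop)

end SignVectors

theorem stmt14 {d : ℕ} (p : ENNReal) (hp : 2 ≤ p)
    (D : Measure (EuclideanSpace ℝ (Fin d))) [IsProbabilityMeasure D]
    (ε δ : ℝ) (hε : 0 < ε) (hδ0 : 0 < δ) (hδ1 : δ ≤ 1)
    (hTV : ∀ v : EuclideanSpace ℝ (Fin d), lpNorm p v ≤ ε → tv D (D.map (· + v)) ≤ δ) :
    ENNReal.ofReal (ε * (d : ℝ) ^ (1 - 1 / p.toReal) / 24 * ((1 - δ) / δ)) ≤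
      ∫⁻ η, ENNReal.ofReal ‖η‖ ∂D := by
  rcases Nat.eq_zero_or_pos d with rfl | hd
  · have hp1 : p ≠ 1 := (ENNReal.one_lt_two.trans_le hp).ne'
    rw [Nat.cast_zero, Real.zero_rpow (one_sub_one_div_toReal_ne_zero hp1)]
    simp
  have hd' : (0 : ℝ) < d := Nat.cast_pos.mpr hd
  obtain ⟨a, ha, hlpa, hta⟩ : ∃ a : ℝ, 0 < a ∧ (d : ℝ) ^ (1 / p.toReal) * a = ε ∧
      ε * (d : ℝ) ^ (1 - 1 / p.toReal) = a * d := by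
    refine ⟨ε * (d : ℝ) ^ (-(1 / p.toReal)), by positivity, ?_, ?_⟩
    · rw [mul_left_comm, ← Real.rpow_add hd', add_neg_cancel, Real.rpow_zero, mul_one]
    · rw [sub_eq_add_neg, Real.rpow_add hd', Real.rpow_one]
      ring
  have hlp : ∀ s, lpNorm p (a • signVec s) ≤ ε := fun s => by
    refine (lpNorm_eq_of_forall_abs_eq (two_pos.trans_le hp).ne' hd ha.le
      fun i => ?_).trans_le hlpa.le
    rw [PiLp.smul_apply, smul_eq_mul, abs_mul, abs_signVec_apply, mul_one, abs_of_pos ha]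
  refine le_trans (ENNReal.ofReal_le_ofReal ?_)
    (le_lintegral_norm_of_forall_le_lintegral_abs_inner_signVec D fun s =>
      ofReal_le_lintegral_abs_of_shift (t := a * d) (by fun_prop) (by positivity) hδ0 hδ1
        (measureReal_le_add_of_tv_map_add_le (hTV _ (hlp s)) (by fun_prop) fun x => ?_))
  · rw [hta]
    exact mul_le_mul_of_nonneg_right (div_le_div_of_nonneg_left (by positivity) (by norm_num)
      (by norm_num)) (div_nonneg (by linarith) hδ0.le)
  · rw [inner_add_left, real_inner_smul_left, real_inner_signVec_self]
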